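/- Let Θ ~ PH(π,T) be a phase-type distributed random variable. Then there exist a positive integer k and a constant c > 0 such that x^k · P(1/Θ > x) → c as x → ∞ (equivalently, F_Θ(u)/u^k → c as u ↓ 0, where F_Θ is the distribution function of Θ). In particular, the law of 1/Θ is regularly varying with index −k. -/

import Mathlib

open MeasureTheory ProbabilityTheory Filter Matrix Set
open scoped Topology ENNReal

noncomputable section

/-- A phase-type representation `(π, T)` of dimension `p`: `π` is a probability vector,
`T` has nonnegative off-diagonal entries, nonpositive row sums, and all eigenvalues of
strictly negative real part. -/
structure IsPHRepr {p : ℕ} (piv : Fin p → ℝ) (T : Matrix (Fin p) (Fin p) ℝ) : Prop where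
  pi_nonneg : ∀ i, 0 ≤ piv i
  pi_sum_one : ∑ i, piv i = 1
  offdiag_nonneg : ∀ i j, i ≠ j → 0 ≤ T i j
  rowsum_nonpos : ∀ i, ∑ j, T i j ≤ 0
  eig_neg : ∀ z ∈ spectrum ℂ (T.map (algebraMap ℝ ℂ)), z.re < 0

/-- Survival function `π exp(T y) e` of PH(π,T). -/
def phSurv {p : ℕ} (piv : Fin p → ℝ) (T : Matrix (Fin p) (Fin p) ℝ) (y : ℝ) : ℝ :=
  ∑ i, ∑ j, piv i * NormedSpace.exp (y • T) i j

/-- Density `π exp(T y) t`, with `t = -T e`, of PH(π,T). -/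
def phDens {p : ℕ} (piv : Fin p → ℝ) (T : Matrix (Fin p) (Fin p) ℝ) (y : ℝ) : ℝ :=
  ∑ i, ∑ j, piv i * NormedSpace.exp (y • T) i j * (-∑ k, T j k)

/-- The phase-type distribution PH(π,T): the measure on (0,∞) with Lebesgue density `phDens`. -/
def phMeasure {p : ℕ} (piv : Fin p → ℝ) (T : Matrix (Fin p) (Fin p) ℝ) : Measure ℝ :=
  volume.withDensity fun y => if 0 < y then ENNReal.ofReal (phDens piv T y) else 0

/-- The law `μ` is regularly varying with index `-α`: the tail is eventually positive and
`μ(λx,∞)/μ(x,∞) → λ^{-α}` as `x → ∞` for every `λ > 0`. -/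
def RegVary (μ : Measure ℝ) (α : ℝ) : Prop :=
  (∀ᶠ x in atTop, 0 < μ (Set.Ioi x)) ∧
  ∀ l : ℝ, 0 < l →
    Tendsto (fun x => (μ (Set.Ioi (l * x))).toReal / (μ (Set.Ioi x)).toReal) atTop
      (𝓝 (l ^ (-α)))

/-- Subexponentiality of the law `μ`: positive tail and `(1 - F*F(x))/(1 - F(x)) → 2`. -/
def Subexponential (μ : Measure ℝ) : Prop :=
  (∀ x : ℝ, 0 < μ (Set.Ioi x)) ∧
  Tendsto (fun x => ((μ.conv μ) (Set.Ioi x)).toReal / (μ (Set.Ioi x)).toReal) atTop (𝓝 2)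

/-- The class 𝒜: subexponential laws with `limsup F̄(cx)/F̄(x) < 1` for some `c > 1`. -/
def ClassA (μ : Measure ℝ) : Prop :=
  Subexponential μ ∧ ∃ c : ℝ, 1 < c ∧
    Filter.limsup (fun x => (μ (Set.Ioi (c * x))).toReal / (μ (Set.Ioi x)).toReal) atTop < 1

/-- Extended regular variation: `liminf F̄(λx)/F̄(x) ≥ λ^{-φ}` for some `φ ≥ 0`, all `λ ≥ 1`. -/
def ExtRegVary (μ : Measure ℝ) : Prop :=
  ∃ φ : ℝ, 0 ≤ φ ∧ ∀ l : ℝ, 1 ≤ l →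
    l ^ (-φ) ≤
      Filter.liminf (fun x => (μ (Set.Ioi (l * x))).toReal / (μ (Set.Ioi x)).toReal) atTop

/-- Intermediate regular variation: `lim_{λ↓1} liminf_{x→∞} F̄(λx)/F̄(x) = 1`. -/
def IntRegVary (μ : Measure ℝ) : Prop :=
  Tendsto
    (fun l : ℝ =>
      Filter.liminf (fun x => (μ (Set.Ioi (l * x))).toReal / (μ (Set.Ioi x)).toReal) atTop)
    (𝓝[>] (1 : ℝ)) (𝓝 1)

/-- Dominated variation: `liminf F̄(λx)/F̄(x) > 0` for some `λ > 1`. -/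
def DomVary (μ : Measure ℝ) : Prop :=
  ∃ l : ℝ, 1 < l ∧
    0 < Filter.liminf (fun x => (μ (Set.Ioi (l * x))).toReal / (μ (Set.Ioi x)).toReal) atTop

/-- Long-tailed laws: positive tail and `F̄(x-y)/F̄(x) → 1` for every `y`. -/
def LongTailed (μ : Measure ℝ) : Prop :=
  (∀ x : ℝ, 0 < μ (Set.Ioi x)) ∧
  ∀ y : ℝ,
    Tendsto (fun x => (μ (Set.Ioi (x - y))).toReal / (μ (Set.Ioi x)).toReal) atTop (𝓝 1)

/-- `μY` is α-regular-variation determining: for every law `μZ` of a nonnegative random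
variable (taken independent of `Y`, i.e. via the product measure), regular variation with
index `-α` of the law of the product implies that of `μZ`. -/
def IsRVD (μY : Measure ℝ) (α : ℝ) : Prop :=
  ∀ μZ : Measure ℝ, IsProbabilityMeasure μZ → μZ (Set.Iio 0) = 0 →
    RegVary (Measure.map (fun q : ℝ × ℝ => q.1 * q.2) (μY.prod μZ)) α → RegVary μZ α

/-!
The distribution function `F(u) = π e - π exp(uT) e = ∫₀ᵘ π exp(yT) t dy` of `Θ` is real analytic,
vanishes at `0`, is nonnegative on `[0, ∞)` (the density is, because `exp(yT)` is entrywise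
nonnegative for a matrix with nonnegative off-diagonal entries), and is not identically zero,
since `Θ` puts mass one on `(0, ∞)`. Hence `F(u) = u^k g(u)` near `0` with `k ≥ 1`, `g` analytic and
`g(0) > 0`, and `P(1/Θ > x) = F(1/x)` gives `x^k P(1/Θ > x) → g(0)`. A tail asymptotic to a
constant times `x^(-k)` is regularly varying of index `-k`.
-/

theorem AnalyticAt.exists_pos_tendsto_div_pow {f : ℝ → ℝ} (hf : AnalyticAt ℝ f 0)
    (hf0 : f 0 = 0) (hnonneg : ∀ᶠ u in 𝓝[>] 0, 0 ≤ f u) (hne : ∃ᶠ u in 𝓝 0, f u ≠ 0) :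
    ∃ k : ℕ, 0 < k ∧ ∃ c : ℝ, 0 < c ∧ Tendsto (fun u => f u / u ^ k) (𝓝[>] 0) (𝓝 c) := by
  have hfin : analyticOrderAt f 0 ≠ ⊤ := by
    rwa [Ne, analyticOrderAt_eq_top, not_eventually]
  obtain ⟨g, hg, hg0, hfg⟩ := hf.analyticOrderAt_ne_top.mp hfin
  set k := analyticOrderNatAt f 0
  have hk : k ≠ 0 := by
    intro hk
    simp only [hk, pow_zero, one_smul] at hfg
    exact hg0 (hfg.self_of_nhds.symm.trans hf0)
  have hquot : (fun u => f u / u ^ k) =ᶠ[𝓝[>] 0] g := by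
    filter_upwards [nhdsWithin_le_nhds hfg, self_mem_nhdsWithin] with u hu (hu0 : 0 < u)
    rw [hu, sub_zero, smul_eq_mul, mul_div_cancel_left₀ _ (pow_ne_zero k hu0.ne')]
  have hlim : Tendsto (fun u => f u / u ^ k) (𝓝[>] 0) (𝓝 (g 0)) :=
    (hg.continuousAt.tendsto.mono_left nhdsWithin_le_nhds).congr' hquot.symm
  have hg0_nonneg : 0 ≤ g 0 := by
    refine ge_of_tendsto hlim ?_
    filter_upwards [hnonneg, self_mem_nhdsWithin] with u hu (hu0 : 0 < u)
    positivity
  exact ⟨k, Nat.pos_of_ne_zero hk, g 0, hg0_nonneg.lt_of_ne' hg0, hlim⟩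

theorem regVary_of_tendsto_rpow_mul {μ : Measure ℝ} {α c : ℝ} (hc : 0 < c)
    (h : Tendsto (fun x => x ^ α * (μ (Ioi x)).toReal) atTop (𝓝 c)) : RegVary μ α := by
  have hpos : ∀ᶠ x in atTop, 0 < (μ (Ioi x)).toReal := by
    filter_upwards [h.eventually (eventually_gt_nhds hc), eventually_gt_atTop 0] with x hx hx0
    exact pos_of_mul_pos_right hx (by positivity)
  refine ⟨hpos.mono fun x hx => (ENNReal.toReal_pos_iff.mp hx).1, fun l hl => ?_⟩
  have hratio := ((h.comp (tendsto_id.const_mul_atTop hl)).div h hc.ne').mul_const (l ^ (-α))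
  rw [div_self hc.ne', one_mul] at hratio
  refine hratio.congr' ?_
  filter_upwards [hpos, eventually_gt_atTop 0] with x hx hx0
  simp only [Pi.div_apply, Function.comp_apply, id]
  rw [Real.mul_rpow hl.le hx0.le, Real.rpow_neg hl.le]
  have : 0 < l ^ α := by positivity
  have : 0 < x ^ α := by positivity
  field_simp

section PhaseType

open NormedSpace

-- `NormedSpace.exp` on matrices needs a Banach-algebra norm; which one does not affect `exp`.
attribute [local instance] Matrix.linftyOpNormedAddCommGroup Matrix.linftyOpNormedRing
  Matrix.linftyOpNormedAlgebra

namespace Matrix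

variable {m n : Type*} [Fintype m] [Fintype n]

theorem exp_apply_nonneg_of_nonneg [DecidableEq n] {A : Matrix n n ℝ} (hA : ∀ i j, 0 ≤ A i j)
    (i j : n) : 0 ≤ exp A i j := by
  have hpow : ∀ k : ℕ, ∀ i j, 0 ≤ (A ^ k) i j := by
    intro k
    induction k with
    | zero => intro i j; rw [pow_zero, one_apply]; split_ifs <;> norm_num
    | succ k ih =>
      intro i j
      rw [pow_succ, mul_apply]
      exact Finset.sum_nonneg fun l _ => mul_nonneg (ih i l) (hA l j)
  have hsum := Pi.hasSum.mp (Pi.hasSum.mp (exp_series_hasSum_exp' (𝕂 := ℝ) A) i) j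
  exact hsum.nonneg fun k => mul_nonneg (by positivity) (hpow k i j)

theorem exp_apply_nonneg_of_offDiag_nonneg [DecidableEq n] {A : Matrix n n ℝ}
    (hA : ∀ i j, i ≠ j → 0 ≤ A i j) (i j : n) : 0 ≤ exp A i j := by
  -- `A + s • 1` is entrywise nonnegative and commutes with `-s • 1`, whose exponential is `e⁻ˢ`.
  set s := ∑ i, |A i i|
  have hs : ∀ i, -A i i ≤ s := fun i =>
    (neg_le_abs _).trans (Finset.single_le_sum (fun j _ => abs_nonneg (A j j)) (Finset.mem_univ i))
  have hshift : ∀ i j, 0 ≤ (A + s • 1) i j := by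
    intro i j
    by_cases hij : i = j
    · subst hij
      simp only [add_apply, smul_apply, one_apply_eq, smul_eq_mul, mul_one]
      linarith [hs i]
    · simpa [hij] using hA i j hij
  have hsplit : A = (-s) • (1 : Matrix n n ℝ) + (A + s • 1) := by
    rw [neg_smul]
    abel
  have hscalar : exp ((-s) • (1 : Matrix n n ℝ)) = Real.exp (-s) • 1 := by
    have h := algebraMap_exp_comm (𝔸 := Matrix n n ℝ) (-s)
    rw [← Real.exp_eq_exp_ℝ, Algebra.algebraMap_eq_smul_one, Algebra.algebraMap_eq_smul_one] at h
    exact h.symm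
  rw [hsplit, exp_add_of_commute _ _ ((Commute.one_left _).smul_left _), hscalar,
    smul_mul_assoc, one_mul, smul_apply, smul_eq_mul]
  exact mul_nonneg (Real.exp_nonneg _) (exp_apply_nonneg_of_nonneg hshift i j)

def dotProductMulVecCLM (v : m → ℝ) (w : n → ℝ) : Matrix m n ℝ →L[ℝ] ℝ :=
  LinearMap.toContinuousLinearMap
    { toFun := fun M => v ⬝ᵥ (M *ᵥ w)
      map_add' := fun M N => by rw [add_mulVec, dotProduct_add]
      map_smul' := fun r M => by rw [smul_mulVec, dotProduct_smul, RingHom.id_apply] }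

@[simp]
theorem dotProductMulVecCLM_apply (v : m → ℝ) (w : n → ℝ) (M : Matrix m n ℝ) :
    dotProductMulVecCLM v w M = v ⬝ᵥ (M *ᵥ w) :=
  rfl

end Matrix

variable {p : ℕ} (piv : Fin p → ℝ) (T : Matrix (Fin p) (Fin p) ℝ)

theorem phSurv_eq_dotProductMulVecCLM :
    phSurv piv T = fun y => dotProductMulVecCLM piv 1 (exp (y • T)) := by
  ext y
  simp [phSurv, dotProduct, mulVec, Finset.mul_sum]

theorem phDens_eq_dotProductMulVecCLM :
    phDens piv T = fun y => dotProductMulVecCLM piv (-(T *ᵥ 1)) (exp (y • T)) := by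
  ext y
  simp [phDens, dotProduct, mulVec, Finset.mul_sum, mul_assoc]

theorem hasDerivAt_phSurv (y : ℝ) : HasDerivAt (phSurv piv T) (-phDens piv T y) y := by
  rw [phSurv_eq_dotProductMulVecCLM]
  refine ((dotProductMulVecCLM piv 1).hasFDerivAt.comp_hasDerivAt y
    (hasDerivAt_exp_smul_const T y)).congr_deriv ?_
  change piv ⬝ᵥ ((exp (y • T) * T) *ᵥ 1) = _
  simp only [phDens_eq_dotProductMulVecCLM, dotProductMulVecCLM_apply, mulVec_neg,
    dotProduct_neg, neg_neg]
  exact congrArg (piv ⬝ᵥ ·) (mulVec_mulVec _ _ _).symm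

theorem analyticAt_phSurv (y : ℝ) : AnalyticAt ℝ (phSurv piv T) y := by
  have hexp : AnalyticAt ℝ exp (y • T) :=
    analyticAt_exp_of_mem_ball _ (by rw [expSeries_radius_eq_top]; exact edist_lt_top _ _)
  rw [phSurv_eq_dotProductMulVecCLM]
  exact (dotProductMulVecCLM piv 1).analyticAt _ |>.comp <|
    hexp.comp (f := fun y : ℝ => y • T) (analyticAt_id.smul analyticAt_const)

theorem continuous_phDens : Continuous (phDens piv T) := by
  rw [phDens_eq_dotProductMulVecCLM]
  fun_prop

theorem integral_phDens_Ioo {u : ℝ} (hu : 0 ≤ u) :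
    ∫ y in Ioo 0 u, phDens piv T y = phSurv piv T 0 - phSurv piv T u := by
  rw [← integral_Ioc_eq_integral_Ioo, ← intervalIntegral.integral_of_le hu,
    intervalIntegral.integral_eq_sub_of_hasDerivAt (f := -phSurv piv T)
      (fun y _ => by simpa using (hasDerivAt_phSurv piv T y).neg)
      ((continuous_phDens piv T).intervalIntegrable 0 u), Pi.neg_apply, Pi.neg_apply]
  ring

theorem phMeasure_Iic_zero : phMeasure piv T (Iic 0) = 0 := by
  rw [phMeasure, withDensity_apply _ measurableSet_Iic,
    setLIntegral_congr_fun measurableSet_Iic fun y (hy : y ≤ 0) => if_neg hy.not_gt]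
  simp

variable {piv T}

theorem phDens_nonneg (hPH : IsPHRepr piv T) {y : ℝ} (hy : 0 ≤ y) : 0 ≤ phDens piv T y := by
  have hexp : ∀ i j, 0 ≤ exp (y • T) i j :=
    exp_apply_nonneg_of_offDiag_nonneg fun i j hij => by
      simpa using mul_nonneg hy (hPH.offdiag_nonneg i j hij)
  exact Finset.sum_nonneg fun i _ => Finset.sum_nonneg fun j _ =>
    mul_nonneg (mul_nonneg (hPH.pi_nonneg i) (hexp i j)) (neg_nonneg.mpr (hPH.rowsum_nonpos j))

theorem phSurv_le_phSurv_zero (hPH : IsPHRepr piv T) {u : ℝ} (hu : 0 ≤ u) :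
    phSurv piv T u ≤ phSurv piv T 0 := by
  rw [← sub_nonneg, ← integral_phDens_Ioo piv T hu]
  exact setIntegral_nonneg measurableSet_Ioo fun y hy => phDens_nonneg hPH hy.1.le

theorem phMeasure_Ioo (hPH : IsPHRepr piv T) {u : ℝ} (hu : 0 ≤ u) :
    phMeasure piv T (Ioo 0 u) = ENNReal.ofReal (phSurv piv T 0 - phSurv piv T u) := by
  rw [phMeasure, withDensity_apply _ measurableSet_Ioo,
    setLIntegral_congr_fun measurableSet_Ioo fun y hy => if_pos hy.1,
    ← ofReal_integral_eq_lintegral_ofReal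
      ((continuous_phDens piv T).integrableOn_Icc.mono_set Ioo_subset_Icc_self)
      ((ae_restrict_iff' measurableSet_Ioo).mpr
        (ae_of_all _ fun y hy => phDens_nonneg hPH hy.1.le)),
    integral_phDens_Ioo piv T hu]

theorem frequently_phSurv_ne_phSurv_zero (hPH : IsPHRepr piv T)
    [IsProbabilityMeasure (phMeasure piv T)] : ∃ᶠ u in 𝓝 0, phSurv piv T u ≠ phSurv piv T 0 := by
  by_contra! hev
  have hconst : ∀ u, phSurv piv T u = phSurv piv T 0 :=
    fun u => AnalyticOnNhd.eqOn_of_preconnected_of_eventuallyEq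
      (fun y _ => analyticAt_phSurv piv T y) analyticOnNhd_const isPreconnected_univ
        (mem_univ 0) hev (mem_univ u)
  have hIoi : phMeasure piv T (Ioi 0) = 0 := by
    refine measure_mono_null (fun y (hy : 0 < y) => ?_)
      (measure_iUnion_null (s := fun n : ℕ => Ioo 0 (n : ℝ)) fun n => ?_)
    · obtain ⟨n, hn⟩ := exists_nat_gt y
      exact mem_iUnion.mpr ⟨n, hy, hn⟩
    · rw [phMeasure_Ioo hPH n.cast_nonneg, hconst n, sub_self, ENNReal.ofReal_zero]
  have huniv := measure_union_null (phMeasure_Iic_zero piv T) hIoi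
  rw [Iic_union_Ioi, measure_univ] at huniv
  exact one_ne_zero huniv

theorem toReal_measure_one_div_gt_of_map_eq_phMeasure (hPH : IsPHRepr piv T)
    {Ω : Type*} [MeasurableSpace Ω] {P : Measure Ω} {Θ : Ω → ℝ} (hΘm : Measurable Θ)
    (hΘlaw : P.map Θ = phMeasure piv T) {x : ℝ} (hx : 0 < x) :
    (P {ω | 1 / Θ ω > x}).toReal = phSurv piv T 0 - phSurv piv T x⁻¹ := by
  have hset : {ω | 1 / Θ ω > x} = Θ ⁻¹' Ioo 0 x⁻¹ := by
    rw [← inv_Ioi₀ hx]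
    ext ω
    simp [one_div]
  rw [hset, ← Measure.map_apply hΘm measurableSet_Ioo, hΘlaw, phMeasure_Ioo hPH (by positivity),
    ENNReal.toReal_ofReal (sub_nonneg.mpr (phSurv_le_phSurv_zero hPH (by positivity)))]

end PhaseType

/-- if `Θ ~ PH(π,T)`, then there are a positive integer `k` and `c > 0` with
`x^k P(1/Θ > x) → c` as `x → ∞`; in particular, the law of `1/Θ` is regularly varying with
index `-k`. -/
theorem ph_reciprocal_regvary
    {Ω : Type*} [MeasureSpace Ω] [IsProbabilityMeasure (ℙ : Measure Ω)]
    {p : ℕ} (piv : Fin p → ℝ) (T : Matrix (Fin p) (Fin p) ℝ) (hPH : IsPHRepr piv T)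
    (Θ : Ω → ℝ) (hΘm : Measurable Θ)
    (hΘlaw : Measure.map Θ ℙ = phMeasure piv T) :
    ∃ k : ℕ, 0 < k ∧ ∃ c : ℝ, 0 < c ∧
      Tendsto (fun x : ℝ => x ^ k * (ℙ {ω | 1 / Θ ω > x}).toReal) atTop (𝓝 c) ∧
      RegVary (Measure.map (fun ω => 1 / Θ ω) ℙ) k := by
  have : IsProbabilityMeasure (phMeasure piv T) :=
    hΘlaw ▸ Measure.isProbabilityMeasure_map hΘm.aemeasurable
  have hF : AnalyticAt ℝ (fun u => phSurv piv T 0 - phSurv piv T u) 0 :=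
    analyticAt_const.sub (analyticAt_phSurv piv T 0)
  obtain ⟨k, hk, c, hc, hlim⟩ := hF.exists_pos_tendsto_div_pow (sub_self _)
    (eventually_mem_nhdsWithin.mono fun u (hu : 0 < u) =>
      sub_nonneg.mpr (phSurv_le_phSurv_zero hPH hu.le))
    ((frequently_phSurv_ne_phSurv_zero hPH).mono fun u hu => sub_ne_zero.mpr hu.symm)
  have hasymp : Tendsto (fun x : ℝ => x ^ k * (ℙ {ω | 1 / Θ ω > x}).toReal) atTop (𝓝 c) := by
    refine (hlim.comp tendsto_inv_atTop_nhdsGT_zero).congr' ?_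
    filter_upwards [eventually_gt_atTop 0] with x hx
    rw [Function.comp_apply, toReal_measure_one_div_gt_of_map_eq_phMeasure hPH hΘm hΘlaw hx,
      inv_pow, div_inv_eq_mul, mul_comm]
  refine ⟨k, hk, c, hc, hasymp, regVary_of_tendsto_rpow_mul hc ?_⟩
  have hlaw : ∀ x, Measure.map (fun ω => 1 / Θ ω) ℙ (Ioi x) = ℙ {ω | 1 / Θ ω > x} :=
    fun x => Measure.map_apply (measurable_const.div hΘm) measurableSet_Ioi
  simpa only [Real.rpow_natCast, hlaw] using hasymp
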